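/- Let $\mathcal{D}$ be a triangulated category with t-structure $t$ such that $\mathcal{D}$ has derived projectives with respect to $t$ (every projective object of $\heartsuit_t$ is $H_t^0$ of a derived projective). Then $H_t^0$ restricts to an equivalence of categories $\mathrm{DProj}_t(\mathcal{D}) \to \mathrm{Proj}(\heartsuit_t)$ between the full subcategory of derived projective objects and the full subcategory of projective objects of the heart. -/

import Mathlib

open CategoryTheory Limits Pretriangulated

namespace Paper

universe v u

variable {C : Type u} [Category.{v} C] [Preadditive C] [HasZeroObject C]
  [HasShift C ℤ] [∀ n : ℤ, (shiftFunctor C n).Additive] [Pretriangulated C]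

open CategoryTheory.Triangulated

/-- The right perpendicular of a class of objects. -/
def rPerp (T : Set C) : Set C := {Y | ∀ X ∈ T, ∀ f : X ⟶ Y, f = 0}

/-- The left perpendicular of a class of objects. -/
def lPerp (T : Set C) : Set C := {X | ∀ Y ∈ T, ∀ f : X ⟶ Y, f = 0}

/-- `S^{⊥_{>0}}`. -/
def perpGT (S : Set C) : Set C := {X | ∀ P ∈ S, ∀ m : ℤ, 0 < m → ∀ f : P ⟶ X⟦m⟧, f = 0}

/-- `S^{⊥_{<0}}`. -/
def perpLT (S : Set C) : Set C := {X | ∀ P ∈ S, ∀ m : ℤ, m < 0 → ∀ f : P ⟶ X⟦m⟧, f = 0}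

/-- The pair `(S^{⊥_{>0}}, S^{⊥_{<0}})` is the t-structure `t`. -/
def IsSiltingTStructureFor (S : Set C) (t : TStructure C) : Prop :=
  (∀ X : C, t.le 0 X ↔ X ∈ perpGT S) ∧ (∀ X : C, t.ge 0 X ↔ X ∈ perpLT S)

/-- `X` is a retract (direct summand) of `Y`. -/
def IsRetractOf (X Y : C) : Prop := ∃ (i : X ⟶ Y) (r : Y ⟶ X), i ≫ r = 𝟙 X


/-- An indecomposable object: nonzero, and not a nontrivial biproduct. -/
def IndecObj {A : Type*} [Category A] [Limits.HasZeroMorphisms A]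
    [HasBinaryBiproducts A] (X : A) : Prop :=
  ¬ IsZero X ∧ ∀ Y Z : A, Nonempty (X ≅ Y ⊞ Z) → IsZero Y ∨ IsZero Z

section Biprod
variable [HasFiniteBiproducts C]

/-- The Karoubi closure: direct summands of finite coproducts of objects of `S`. -/
def Kar (S : Set C) : Set C :=
  {X | ∃ (n : ℕ) (f : Fin n → C), (∀ i, f i ∈ S) ∧ IsRetractOf X (⨁ f)}

/-- A class of objects is Krull–Schmidt: every object is a finite biproduct of
objects of the class with local endomorphism rings. -/
def KrullSchmidtOn (T : Set C) : Prop :=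
  ∀ X ∈ T, ∃ (n : ℕ) (f : Fin n → C),
    (∀ i, f i ∈ T ∧ IsLocalRing (End (f i))) ∧ Nonempty (X ≅ ⨁ f)

/-- The category `C` is Krull–Schmidt. -/
def IsKrullSchmidt : Prop :=
  ∀ X : C, ∃ (n : ℕ) (f : Fin n → C),
    (∀ i, IsLocalRing (End (f i))) ∧ Nonempty (X ≅ ⨁ f)

/-- A silting collection: pairwise non-isomorphic indecomposables whose Karoubi
closure is Krull–Schmidt, such that the perpendicular pair is the t-structure `t`. -/
structure IsSiltingCollection (S : Set C) (t : TStructure C) : Prop where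
  indec : ∀ P ∈ S, IndecObj P
  pairwise_noniso : ∀ P ∈ S, ∀ Q ∈ S, P ≠ Q → IsEmpty (P ≅ Q)
  kar_ks : KrullSchmidtOn (Kar S)
  tstr : IsSiltingTStructureFor S t

end Biprod

/-- Derived projective objects with respect to a t-structure. -/
def IsDerivedProjective (t : TStructure C) (P : C) : Prop :=
  t.le 0 P ∧ ∀ (X : C), t.le 0 X → ∀ f : P ⟶ X⟦(1 : ℤ)⟧, f = 0

/-- The heart of a t-structure, as a class of objects. -/
def heartSet (t : TStructure C) : Set C := {X | t.le 0 X ∧ t.ge 0 X}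

/-- The heart of a t-structure, as a full subcategory. -/
abbrev Heart (t : TStructure C) := ObjectProperty.FullSubcategory (fun X => X ∈ heartSet t)

instance (P : C → Prop) : Preadditive (ObjectProperty.FullSubcategory P) where
  homGroup X Y := InducedCategory.homEquiv.addCommGroup
  add_comp _ _ _ f f' g := by ext; exact Preadditive.add_comp _ _ _ f.hom f'.hom g.hom
  comp_add _ _ _ f g g' := by ext; exact Preadditive.comp_add _ _ _ f.hom g.hom g'.hom

/-- Truncation data for a t-structure: the truncation functors `t_{≤0}` (right adjoint
to the inclusion of `D^{t≤0}`), `t_{≥0}` (left adjoint to the inclusion of `D^{t≥0}`),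
and the zeroth cohomology functor `H = t_{≤0} ∘ t_{≥0}`. -/
structure TruncationData (t : TStructure C) where
  /-- the zeroth cohomology functor -/
  H : C ⥤ C
  H_heart : ∀ X : C, H.obj X ∈ heartSet t
  τle : C ⥤ C
  τleCounit : τle ⟶ 𝟭 C
  τle_mem : ∀ X : C, t.le 0 (τle.obj X)
  τle_fac : ∀ (X Z : C), t.le 0 Z → ∀ f : Z ⟶ X,
    ∃! g : Z ⟶ τle.obj X, g ≫ τleCounit.app X = f
  τge : C ⥤ C
  τgeUnit : 𝟭 C ⟶ τge
  τge_mem : ∀ X : C, t.ge 0 (τge.obj X)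
  τge_fac : ∀ (X Z : C), t.ge 0 Z → ∀ f : X ⟶ Z,
    ∃! g : τge.obj X ⟶ Z, τgeUnit.app X ≫ g = f
  H_eq : H = τge ⋙ τle

/-- The zeroth cohomology functor, valued in the heart. -/
def TruncationData.Hh {t : TStructure C} (TD : TruncationData t) : C ⥤ Heart t :=
  ObjectProperty.lift _ TD.H TD.H_heart

/-- A projective cover: an essential epimorphism from a projective object. -/
def IsProjectiveCover {A : Type*} [Category A] {P X : A} (π : P ⟶ X) : Prop :=
  Projective P ∧ Epi π ∧ ∀ (R : A) (g : R ⟶ P), Epi (g ≫ π) → Epi g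

/-- A derived projective cover of `X`. -/
def IsDerivedProjectiveCover {t : TStructure C} (TD : TruncationData t)
    {P X : C} (π : P ⟶ X) : Prop :=
  IsDerivedProjective t P ∧ IsProjectiveCover (TD.Hh.map π)

/-- A t-structure is non-degenerate. -/
def NonDegenerate (t : TStructure C) : Prop :=
  (∀ X : C, (∀ n : ℤ, t.le n X) → IsZero X) ∧ (∀ X : C, (∀ n : ℤ, t.ge n X) → IsZero X)

/-- An object of a category has finite length: bounded chains of subobjects. -/
def FiniteLengthObj {A : Type*} [Category A] (X : A) : Prop :=
  ∃ n : ℕ, ∀ s : Fin (n + 1) → Subobject X, ¬ StrictMono s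

/-- `D` has derived projectives: every projective of the heart is `H⁰` of a
derived projective. -/
def HasDerivedProjectives {t : TStructure C} (TD : TruncationData t) : Prop :=
  ∀ Q : Heart t, Projective Q → ∃ P : C, IsDerivedProjective t P ∧ Nonempty (TD.Hh.obj P ≅ Q)

/-- `D` has enough derived projectives. -/
def HasEnoughDerivedProjectives {t : TStructure C} (TD : TruncationData t) : Prop :=
  EnoughProjectives (Heart t) ∧ HasDerivedProjectives TD

/-- The extension closure of a class of objects. -/
inductive ExtClos (T : Set C) : C → Prop
  | of {X : C} : X ∈ T → ExtClos T X
  | zero {X : C} : IsZero X → ExtClos T X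
  | ext {A E B : C} (f : A ⟶ E) (g : E ⟶ B) (h : B ⟶ A⟦(1 : ℤ)⟧) :
      Triangle.mk f g h ∈ (distTriang C) → ExtClos T A → ExtClos T B → ExtClos T E

/-- The Karoubi (retract) closure of a class of objects. -/
def KarClos (T : Set C) : Set C := {X | ∃ Y ∈ T, IsRetractOf X Y}

/-- The triangulated subcategory generated by a class of objects. -/
inductive TriaClos (T : Set C) : C → Prop
  | of {X : C} : X ∈ T → TriaClos T X
  | zero {X : C} : IsZero X → TriaClos T X
  | shift {X : C} (n : ℤ) : TriaClos T X → TriaClos T (X⟦n⟧)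
  | ext {A E B : C} (f : A ⟶ E) (g : E ⟶ B) (h : B ⟶ A⟦(1 : ℤ)⟧) :
      Triangle.mk f g h ∈ (distTriang C) → TriaClos T A → TriaClos T B → TriaClos T E

/-- The thick subcategory generated by a class of objects. -/
inductive ThickClos (T : Set C) : C → Prop
  | of {X : C} : X ∈ T → ThickClos T X
  | zero {X : C} : IsZero X → ThickClos T X
  | shift {X : C} (n : ℤ) : ThickClos T X → ThickClos T (X⟦n⟧)
  | ext {A E B : C} (f : A ⟶ E) (g : E ⟶ B) (h : B ⟶ A⟦(1 : ℤ)⟧) :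
      Triangle.mk f g h ∈ (distTriang C) → ThickClos T A → ThickClos T B → ThickClos T E
  | retract {X Y : C} : IsRetractOf X Y → ThickClos T Y → ThickClos T X

/-- A thick subcategory, as a class of objects. -/
structure IsThickSet (T : Set C) : Prop where
  zero : ∀ X : C, IsZero X → X ∈ T
  shift : ∀ X ∈ T, ∀ n : ℤ, X⟦n⟧ ∈ T
  ext : ∀ (A E B : C) (f : A ⟶ E) (g : E ⟶ B) (h : B ⟶ A⟦(1 : ℤ)⟧),
    Triangle.mk f g h ∈ (distTriang C) → A ∈ T → B ∈ T → E ∈ T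
  retract : ∀ X Y : C, IsRetractOf X Y → Y ∈ T → X ∈ T

/-- A weight structure on the subcategory of `C` given by the class `CC`. -/
structure WeightStructureOn (CC : Set C) where
  le : Set C
  ge : Set C
  le_sub : le ⊆ CC
  ge_sub : ge ⊆ CC
  le_iso : ∀ X Y : C, (X ≅ Y) → X ∈ le → Y ∈ le
  ge_iso : ∀ X Y : C, (X ≅ Y) → X ∈ ge → Y ∈ ge
  le_retract : ∀ X Y : C, IsRetractOf X Y → Y ∈ le → X ∈ le
  ge_retract : ∀ X Y : C, IsRetractOf X Y → Y ∈ ge → X ∈ ge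
  le_shift : ∀ X ∈ le, X⟦(1 : ℤ)⟧ ∈ le
  ge_shift : ∀ X ∈ ge, X⟦(-1 : ℤ)⟧ ∈ ge
  orth : ∀ X : C, X⟦(1 : ℤ)⟧ ∈ ge → ∀ Y ∈ le, ∀ f : X ⟶ Y, f = 0
  decomp : ∀ X ∈ CC, ∃ (A B : C) (f : A ⟶ X) (g : X ⟶ B) (h : B ⟶ A⟦(1 : ℤ)⟧),
    Triangle.mk f g h ∈ (distTriang C) ∧ A⟦(1 : ℤ)⟧ ∈ ge ∧ B ∈ le

namespace WeightStructureOn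

variable {CC : Set C} (w : WeightStructureOn CC)

/-- `C_{w>0}`. -/
def gt : Set C := {X | X⟦(1 : ℤ)⟧ ∈ w.ge}

/-- `C_{w<0}`. -/
def lt : Set C := {X | X⟦(-1 : ℤ)⟧ ∈ w.le}

end WeightStructureOn


/-! For `X ∈ D^{≤0}` the counit `τ≤0 τ≥0 X ⟶ τ≥0 X` is invertible, so the unit of `τ≥0` yields a
natural map `X ⟶ H X` through which every map from `X` into `D^{≥0}` factors uniquely. For a
derived projective `P`, composing with it is also bijective on maps out of `P`, because the fibre
of `X ⟶ τ≥0 X` lies in `D^{≤-1}`, which `P` does not see. Comparing both descriptions of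
`Hom(P, H Q)` shows that `H` is fully faithful on derived projectives. Finally `H P` is
projective: the cone of an epimorphism `E ⟶ X` of the heart lies in `D^{≤-1}`, so every map
`P ⟶ X` lifts to `E`. -/

section DerivedProjective

variable {t : TStructure C} {P : C}

lemma IsDerivedProjective.hom_eq_zero (hP : IsDerivedProjective t P) {M : C} (hM : t.le (-1) M)
    (f : P ⟶ M) : f = 0 := by
  let e : (M⟦(-1 : ℤ)⟧)⟦(1 : ℤ)⟧ ≅ M := (shiftEquiv C (1 : ℤ)).counitIso.app M
  have hf : f ≫ e.inv = 0 := hP.2 _ (t.le_shift (-1) (-1) 0 (by norm_num) M hM) _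
  simpa using congrArg (· ≫ e.hom) hf

lemma IsDerivedProjective.comp_mor₂_bijective (hP : IsDerivedProjective t P) (T : Triangle C)
    (hT : T ∈ distTriang C) (h₁ : t.le (-1) T.obj₁) :
    Function.Bijective (fun f : P ⟶ T.obj₂ => f ≫ T.mor₂) := by
  have h₁' : t.le (-1) (T.obj₁⟦(1 : ℤ)⟧) :=
    t.le_monotone (by norm_num) _ (t.le_shift (-1) 1 (-2) (by norm_num) _ h₁)
  refine ⟨fun f₁ f₂ hf => ?_, fun b => ?_⟩
  · obtain ⟨a, ha⟩ := Triangle.coyoneda_exact₂ T hT (f₁ - f₂)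
      (by rw [Preadditive.sub_comp, sub_eq_zero]; exact hf)
    rw [← sub_eq_zero, ha, hP.hom_eq_zero h₁ a, zero_comp]
  · obtain ⟨f, hf⟩ := Triangle.coyoneda_exact₃ T hT b (hP.hom_eq_zero h₁' _)
    exact ⟨f, hf.symm⟩

lemma le_neg_one_of_epi {E X : Heart t} (e : E ⟶ X) [Epi e] {N : C} {c : X.obj ⟶ N}
    {d : N ⟶ E.obj⟦(1 : ℤ)⟧} (hT : Triangle.mk e.hom c d ∈ distTriang C) : t.le (-1) N := by
  have : t.IsLE E.obj 0 := ⟨E.2.1⟩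
  have hE₁ : t.IsLE (E.obj⟦(1 : ℤ)⟧) (-1) := t.isLE_shift E.obj 0 1 (-1)
  have hN : t.IsLE N 0 :=
    t.isLE₂ _ (rot_of_distTriang _ hT) 0 ⟨X.2.1⟩ ⟨t.le_monotone (by norm_num) _ hE₁.le⟩
  obtain ⟨A, B, hA, hB, a, g, δ, hT'⟩ := t.exists_triangle N (-1) 0 (by norm_num)
  have hA₁ : t.le 0 (A⟦(1 : ℤ)⟧) :=
    t.le_monotone (by norm_num) _ (t.le_shift (-1) 1 (-2) (by norm_num) A hA)
  have hB₀ : t.IsLE B 0 := t.isLE₂ _ (rot_of_distTriang _ hT') 0 hN ⟨hA₁⟩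
  -- `c ≫ g` is a morphism of the heart killed by the epimorphism `e`.
  let B' : Heart t := ⟨B, hB₀.le, hB⟩
  have hcg : c ≫ g = 0 := by
    have hec : e.hom ≫ c = 0 := comp_distTriang_mor_zero₁₂ _ hT
    have h₀ : e ≫ ObjectProperty.homMk (Y := B') (c ≫ g) = e ≫ ObjectProperty.homMk 0 := by
      ext
      simp [reassoc_of% hec]
    exact congrArg (·.hom) ((cancel_epi e).1 h₀)
  obtain ⟨w, hw⟩ := Triangle.yoneda_exact₃ _ hT g hcg
  have hg : g = 0 := by
    rw [hw, t.zero_of_isLE_of_isGE w (-1) 0 (by norm_num) hE₁ ⟨hB⟩]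
    exact comp_zero
  -- Hence `N` is a retract of `A ∈ D^{≤-1}`.
  obtain ⟨r, hr⟩ : ∃ r : N ⟶ A, 𝟙 N = r ≫ a :=
    Triangle.coyoneda_exact₂ _ hT' (𝟙 N) (Category.id_comp g |>.trans hg)
  rw [t.le_iff_isLE, t.isLE_iff_orthogonal (-1) 0 (by norm_num)]
  intro Y f hY
  calc f = r ≫ a ≫ f := by rw [← Category.assoc, ← hr, Category.id_comp]
    _ = 0 := by rw [t.zero_of_isLE_of_isGE (a ≫ f) (-1) 0 (by norm_num) ⟨hA⟩ hY, comp_zero]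

lemma IsDerivedProjective.exists_lift_of_epi (hP : IsDerivedProjective t P) {E X : Heart t}
    (e : E ⟶ X) [Epi e] (f : P ⟶ X.obj) : ∃ l : P ⟶ E.obj, l ≫ e.hom = f := by
  obtain ⟨N, c, d, hT⟩ := distinguished_cocone_triangle e.hom
  obtain ⟨l, hl⟩ := Triangle.coyoneda_exact₂ _ hT f (hP.hom_eq_zero (le_neg_one_of_epi e hT) _)
  exact ⟨l, hl.symm⟩

end DerivedProjective

namespace TruncationData

variable {t : TStructure C} (TD : TruncationData t)

lemma isIso_τleCounit_app {Y : C} (hY : t.le 0 Y) : IsIso (TD.τleCounit.app Y) := by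
  obtain ⟨s, hs, -⟩ := TD.τle_fac Y Y hY (𝟙 Y)
  refine ⟨s, (TD.τle_fac Y _ (TD.τle_mem Y) (TD.τleCounit.app Y)).unique ?_ ?_, hs⟩
  · simp [hs]
  · simp

lemma isLE_τge_obj {X : C} (hX : t.le 0 X) : t.le 0 (TD.τge.obj X) := by
  rw [t.le_iff_isLE, t.isLE_iff_orthogonal 0 1 rfl]
  intro Y f hY
  exact (TD.τge_fac X Y (t.ge_antitone (by norm_num) _ hY.ge) 0).unique
    (t.zero_of_isLE_of_isGE _ 0 1 (by norm_num) ⟨hX⟩ hY) comp_zero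

def toτge : TD.H ⟶ TD.τge := eqToHom TD.H_eq ≫ Functor.whiskerLeft TD.τge TD.τleCounit

lemma isIso_toτge_app {X : C} (hX : t.le 0 X) : IsIso (TD.toτge.app X) := by
  have := TD.isIso_τleCounit_app (TD.isLE_τge_obj hX)
  simp only [toτge, NatTrans.comp_app, eqToHom_app, Functor.whiskerLeft_app]
  infer_instance

/-- For `X ∈ D^{≤0}`, the composite `X ⟶ τ≥0 X ≅ τ≤0 τ≥0 X = H X`. -/
noncomputable def toH (X : C) (hX : t.le 0 X) : X ⟶ TD.H.obj X :=
  have := TD.isIso_toτge_app hX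
  TD.τgeUnit.app X ≫ inv (TD.toτge.app X)

lemma toH_comp_toτge (X : C) (hX : t.le 0 X) :
    TD.toH X hX ≫ TD.toτge.app X = TD.τgeUnit.app X := by
  have := TD.isIso_toτge_app hX
  simp [toH]

lemma toH_naturality {X Y : C} (f : X ⟶ Y) (hX : t.le 0 X) (hY : t.le 0 Y) :
    TD.toH X hX ≫ TD.H.map f = f ≫ TD.toH Y hY := by
  have := TD.isIso_toτge_app hY
  rw [← cancel_mono (TD.toτge.app Y)]
  calc (TD.toH X hX ≫ TD.H.map f) ≫ TD.toτge.app Y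
      = (TD.toH X hX ≫ TD.toτge.app X) ≫ TD.τge.map f := by
        rw [Category.assoc, Category.assoc, TD.toτge.naturality]
    _ = f ≫ TD.τgeUnit.app Y := by
        rw [toH_comp_toτge]; exact (TD.τgeUnit.naturality f).symm
    _ = (f ≫ TD.toH Y hY) ≫ TD.toτge.app Y := by rw [Category.assoc, toH_comp_toτge]

lemma comp_τgeUnit_bijective {P : C} (hP : IsDerivedProjective t P) (X : C) :
    Function.Bijective (fun f : P ⟶ X => f ≫ TD.τgeUnit.app X) := by
  obtain ⟨A, B, hA, hB, a, g, δ, hT⟩ := t.exists_triangle X (-1) 0 (by norm_num)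
  -- `τ≥0 X` is a retract of `B` compatibly with the units, so `A ∈ D^{≤-1}` is the fibre.
  obtain ⟨u, hu, -⟩ := TD.τge_fac X B hB g
  obtain ⟨v, hv⟩ : ∃ v : B ⟶ TD.τge.obj X, TD.τgeUnit.app X = g ≫ v :=
    Triangle.yoneda_exact₂ _ hT (TD.τgeUnit.app X)
      (t.zero_of_isLE_of_isGE _ (-1) 0 (by norm_num) ⟨hA⟩ ⟨TD.τge_mem X⟩)
  have huv : u ≫ v = 𝟙 _ :=
    (TD.τge_fac X _ (TD.τge_mem X) (TD.τgeUnit.app X)).unique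
      (by rw [← Category.assoc, hu]; exact hv.symm) (Category.comp_id _)
  have hcomp : (fun f : P ⟶ _ => f ≫ u) ∘ (fun f : P ⟶ X => f ≫ TD.τgeUnit.app X) =
      fun f => f ≫ g := by
    funext f
    simp [hu]
  refine Function.Bijective.of_comp_left (f := fun f : P ⟶ _ => f ≫ u) ?_ fun x y hxy => ?_
  · rw [hcomp]
    exact hP.comp_mor₂_bijective _ hT hA
  · simpa [huv] using congrArg (· ≫ v) hxy

lemma comp_toH_bijective {P : C} (hP : IsDerivedProjective t P) {X : C} (hX : t.le 0 X) :
    Function.Bijective (fun f : P ⟶ X => f ≫ TD.toH X hX) := by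
  have := TD.isIso_toτge_app hX
  have hcomp : (fun f : P ⟶ _ => f ≫ TD.toτge.app X) ∘ (fun f : P ⟶ X => f ≫ TD.toH X hX) =
      fun f => f ≫ TD.τgeUnit.app X := by
    funext f
    simp [toH_comp_toτge]
  refine Function.Bijective.of_comp_left (f := fun f : P ⟶ _ => f ≫ TD.toτge.app X) ?_
    fun _ _ => (cancel_mono _).1
  rw [hcomp]
  exact TD.comp_τgeUnit_bijective hP X

lemma toH_comp_bijective {X : C} (hX : t.le 0 X) {Z : C} (hZ : t.ge 0 Z) :
    Function.Bijective (fun q : TD.H.obj X ⟶ Z => TD.toH X hX ≫ q) := by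
  have := TD.isIso_toτge_app hX
  have hcomp : (fun q : TD.H.obj X ⟶ Z => TD.toH X hX ≫ q) ∘ (fun q => TD.toτge.app X ≫ q) =
      fun q => TD.τgeUnit.app X ≫ q := by
    funext q
    simp [reassoc_of% toH_comp_toτge]
  have hpre : Function.Bijective (fun q : TD.τge.obj X ⟶ Z => TD.toτge.app X ≫ q) :=
    ⟨fun _ _ => (cancel_epi _).1, fun q => ⟨inv (TD.toτge.app X) ≫ q, IsIso.hom_inv_id_assoc _ q⟩⟩
  refine (Function.Bijective.of_comp_iff _ hpre).1 ?_
  rw [hcomp]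
  exact Function.bijective_iff_existsUnique _ |>.2 (TD.τge_fac X Z hZ)

lemma H_map_bijective {P Q : C} (hP : IsDerivedProjective t P) (hQ : IsDerivedProjective t Q) :
    Function.Bijective (fun f : P ⟶ Q => TD.H.map f) := by
  have hcomp : (fun q => TD.toH P hP.1 ≫ q) ∘ (fun f : P ⟶ Q => TD.H.map f) =
      fun f => f ≫ TD.toH Q hQ.1 :=
    funext fun f => TD.toH_naturality f hP.1 hQ.1
  refine (Function.Bijective.of_comp_iff' (TD.toH_comp_bijective hP.1 (TD.H_heart Q).2) _).1 ?_
  rw [hcomp]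
  exact TD.comp_toH_bijective hP hQ.1

lemma projective_Hh_obj {P : C} (hP : IsDerivedProjective t P) : Projective (TD.Hh.obj P) where
  factors {E X} g e _ := by
    obtain ⟨l, hl⟩ := hP.exists_lift_of_epi e (TD.toH P hP.1 ≫ g.hom)
    obtain ⟨l', rfl⟩ := (TD.toH_comp_bijective hP.1 E.2.2).2 l
    refine ⟨ObjectProperty.homMk l', ObjectProperty.hom_ext _ ?_⟩
    change l' ≫ e.hom = g.hom
    exact (TD.toH_comp_bijective hP.1 X.2.2).1 (by simpa using hl)

end TruncationData

/-- if `D` has derived projectives, `H⁰` restricts to an equivalence between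
derived projectives and projectives of the heart (fully faithful, with essential image
exactly the projectives). -/
theorem H0_equivalence_derivedProjectives (t : TStructure C) (TD : TruncationData t)
    (h : HasDerivedProjectives TD) :
    (ObjectProperty.ι (IsDerivedProjective t) ⋙ TD.Hh).Full ∧
    (ObjectProperty.ι (IsDerivedProjective t) ⋙ TD.Hh).Faithful ∧
    (∀ Q : Heart t, Projective Q ↔
      ∃ P : ObjectProperty.FullSubcategory (IsDerivedProjective t),
        Nonempty ((ObjectProperty.ι (IsDerivedProjective t) ⋙ TD.Hh).obj P ≅ Q)) := by
  refine ⟨⟨fun {P Q} φ => ?_⟩, ⟨fun {P Q} f g hfg => ?_⟩, fun Q => ⟨fun hQ => ?_, ?_⟩⟩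
  · obtain ⟨f, hf⟩ := (TD.H_map_bijective P.2 Q.2).2 φ.hom
    exact ⟨ObjectProperty.homMk f, ObjectProperty.hom_ext _ hf⟩
  · exact ObjectProperty.hom_ext _ ((TD.H_map_bijective P.2 Q.2).1 (congrArg (·.hom) hfg))
  · obtain ⟨P, hP, e⟩ := h Q hQ
    exact ⟨⟨P, hP⟩, e⟩
  · rintro ⟨P, ⟨e⟩⟩
    exact Projective.of_iso e (TD.projective_Hh_obj P.2)

end Paper
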